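/- The subgroup B := ⟨a, b, w⟩ of Aut T embeds into the permutational wreath product (C2 × C2) ≀ D8 = (C2 × C2) ⋉ D8^4, where the Klein group C2 × C2 acts on the four direct factors by its regular action on itself; in particular B is a finite 2-group. -/

import Mathlib

universe u

namespace DicePaper

/-- Words of length `n` over the level-indexed sequence of alphabets `X`. -/
def Word (X : ℕ → Type u) : ℕ → Type u
  | 0 => PUnit
  | n + 1 => X 0 × Word (fun k => X (k + 1)) n

/-- An automorphism of the spherically homogeneous rooted tree with alphabets `X`,
encoded by its portrait: a permutation of the children alphabet at each vertex. -/
def TreeAut (X : ℕ → Type u) : Type u :=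
  ∀ n, Word X n → Equiv.Perm (X n)

namespace TreeAut

/-- The section (state) of a tree automorphism at a first-level vertex. -/
def sec {X : ℕ → Type u} (f : TreeAut X) (x : X 0) : TreeAut fun k => X (k + 1) :=
  fun n v => f (n + 1) (x, v)

/-- Action of a tree automorphism on the vertices (words). -/
def act : ∀ (X : ℕ → Type u), TreeAut X → ∀ n, Word X n → Word X n
  | _, _, 0, _ => PUnit.unit
  | X, f, n + 1, v => (f 0 PUnit.unit v.1, act (fun k => X (k + 1)) (f.sec v.1) n v.2)

/-- The inverse action on words. -/
def invAct : ∀ (X : ℕ → Type u), TreeAut X → ∀ n, Word X n → Word X n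
  | _, _, 0, _ => PUnit.unit
  | X, f, n + 1, v =>
    ((f 0 PUnit.unit)⁻¹ v.1,
      invAct (fun k => X (k + 1)) (f.sec ((f 0 PUnit.unit)⁻¹ v.1)) n v.2)

variable {X : ℕ → Type u}

instance : One (TreeAut X) := ⟨fun _ _ => 1⟩
instance : Mul (TreeAut X) := ⟨fun f g n v => f n (act X g n v) * g n v⟩
instance : Inv (TreeAut X) := ⟨fun f n v => (f n (invAct X f n v))⁻¹⟩

theorem one_apply (n : ℕ) (v : Word X n) : (1 : TreeAut X) n v = 1 := rfl
theorem mul_apply (f g : TreeAut X) (n : ℕ) (v : Word X n) :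
    (f * g) n v = f n (act X g n v) * g n v := rfl
theorem inv_apply (f : TreeAut X) (n : ℕ) (v : Word X n) :
    f⁻¹ n v = (f n (invAct X f n v))⁻¹ := rfl

theorem act_one : ∀ (n : ℕ) (X : ℕ → Type u) (v : Word X n), act X 1 n v = v
  | 0, _, _ => rfl
  | n + 1, X, v => by
    show ((1 : Equiv.Perm (X 0)) v.1, act _ (sec 1 v.1) n v.2) = v
    have : sec (1 : TreeAut X) v.1 = 1 := rfl
    rw [this, act_one n _ v.2]
    rfl

theorem sec_mul (f g : TreeAut X) (x : X 0) :
    sec (f * g) x = sec f (g 0 PUnit.unit x) * sec g x := rfl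

theorem act_mul : ∀ (n : ℕ) (X : ℕ → Type u) (f g : TreeAut X) (v : Word X n),
    act X (f * g) n v = act X f n (act X g n v)
  | 0, _, _, _, _ => rfl
  | n + 1, X, f, g, v => by
    show ((f * g) 0 PUnit.unit v.1, act _ (sec (f * g) v.1) n v.2) = _
    rw [sec_mul, act_mul n _ (sec f (g 0 PUnit.unit v.1)) (sec g v.1) v.2]
    rfl

theorem sec_inv (f : TreeAut X) (x : X 0) :
    sec f⁻¹ x = (sec f ((f 0 PUnit.unit)⁻¹ x))⁻¹ := by
  funext n v
  rfl

theorem act_invAct : ∀ (n : ℕ) (X : ℕ → Type u) (f : TreeAut X) (v : Word X n),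
    act X f n (invAct X f n v) = v
  | 0, _, _, _ => rfl
  | n + 1, X, f, v => by
    show (f 0 PUnit.unit ((f 0 PUnit.unit)⁻¹ v.1),
      act _ (sec f ((f 0 PUnit.unit)⁻¹ v.1)) n
        (invAct _ (sec f ((f 0 PUnit.unit)⁻¹ v.1)) n v.2)) = v
    rw [act_invAct n _ _ v.2]
    simp
    rfl

theorem invAct_act : ∀ (n : ℕ) (X : ℕ → Type u) (f : TreeAut X) (v : Word X n),
    invAct X f n (act X f n v) = v
  | 0, _, _, _ => rfl
  | n + 1, X, f, v => by
    show ((f 0 PUnit.unit)⁻¹ (f 0 PUnit.unit v.1),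
      invAct _ (sec f ((f 0 PUnit.unit)⁻¹ (f 0 PUnit.unit v.1))) n
        (act _ (sec f v.1) n v.2)) = v
    have h : (f 0 PUnit.unit)⁻¹ (f 0 PUnit.unit v.1) = v.1 := by simp
    rw [h, invAct_act n _ _ v.2]
    rfl

instance : Group (TreeAut X) where
  mul_assoc f g h := by
    funext n v
    show (f n (act X g n (act X h n v)) * g n (act X h n v)) * h n v
        = f n (act X (g * h) n v) * (g n (act X h n v) * h n v)
    rw [act_mul]
    exact mul_assoc _ _ _
  one_mul f := by
    funext n v
    show (1 : TreeAut X) n (act X f n v) * f n v = f n v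
    rw [one_apply, one_mul]
  mul_one f := by
    funext n v
    show f n (act X 1 n v) * (1 : TreeAut X) n v = f n v
    rw [act_one, one_apply, mul_one]
  inv_mul_cancel f := by
    funext n v
    show f⁻¹ n (act X f n v) * f n v = 1
    rw [inv_apply, invAct_act, inv_mul_cancel]

end TreeAut



/-- The alphabet `X = {0,…,7}` identified with `(ℤ/2)³` via binary digits. -/
abbrev V : Type := ZMod 2 × ZMod 2 × ZMod 2

/-- The rooted automorphism of the regular rooted tree over `V` determined by a
permutation of the alphabet: it permutes the first letter of every word. -/
def rooted (σ : Equiv.Perm V) : TreeAut fun _ => V :=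
  fun n _ => match n with
  | 0 => σ
  | _ + 1 => 1

/-- The rooted automorphism `a` (adding `1`, i.e. flipping the first binary digit). -/
def aAut : TreeAut fun _ => V := rooted (Equiv.addLeft ((1, 0, 0) : V))

/-- The rooted automorphism `b` (adding `2`, i.e. flipping the second binary digit). -/
def bAut : TreeAut fun _ => V := rooted (Equiv.addLeft ((0, 1, 0) : V))

/-- The rooted automorphism `c` (adding `4`, i.e. flipping the third binary digit). -/
def cAut : TreeAut fun _ => V := rooted (Equiv.addLeft ((0, 0, 1) : V))

/-- The portrait of the directed automorphism `w`: its first-level sections are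
`w` at `0`, `a` at `3 = (1,1,0)`, `b` at `5 = (1,0,1)`, `c` at `6 = (0,1,1)`,
and trivial elsewhere; `w` fixes the first level. -/
def wPerm : ∀ n, Word (fun _ => V) n → Equiv.Perm V
  | 0, _ => 1
  | n + 1, v =>
    if v.1 = (0 : V) then wPerm n v.2
    else
      match n with
      | 0 =>
        if v.1 = ((1, 1, 0) : V) then Equiv.addLeft ((1, 0, 0) : V)
        else if v.1 = ((1, 0, 1) : V) then Equiv.addLeft ((0, 1, 0) : V)
        else if v.1 = ((0, 1, 1) : V) then Equiv.addLeft ((0, 0, 1) : V)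
        else 1
      | _ + 1 => 1

/-- The directed automorphism `w` with `w = (w, 1, 1, a, 1, b, c, 1)`. -/
def wAut : TreeAut fun _ => V := fun n v => wPerm n v

/-- For `k ∈ X`, the unique element `h_k` of `H = ⟨a,b,c⟩` with `h_k(0) = k`,
as a rooted automorphism of the tree. -/
def hA (k : V) : TreeAut fun _ => V := rooted (Equiv.addLeft k)

/-- The conjugates `w_k := h_k⁻¹ w h_k`, `k ∈ X`. -/
def wk (k : V) : TreeAut fun _ => V := (hA k)⁻¹ * wAut * hA k

/-- The red tetrahedron `{0, 3, 5, 6}`. -/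
def red : Set V := {(0, 0, 0), (1, 1, 0), (1, 0, 1), (0, 1, 1)}

/-- The black tetrahedron `{1, 2, 4, 7}`. -/
def black : Set V := {(1, 0, 0), (0, 1, 0), (0, 0, 1), (1, 1, 1)}

end DicePaper

namespace DicePaper

/-- The Klein four-group, as the index/acting group of the wreath product. -/
abbrev Klein : Type := Multiplicative (ZMod 2 × ZMod 2)

/-- The regular (translation) action of the Klein four-group on the direct power
`D₈^(C2 × C2)`, permuting the four factors. -/
def regAct : Klein →* MulAut ((ZMod 2 × ZMod 2) → DihedralGroup 4) where
  toFun g :=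
    { toFun := fun f x => f (g.toAdd + x)
      invFun := fun f x => f (-g.toAdd + x)
      left_inv := by intro f; funext x; simp
      right_inv := by intro f; funext x; simp
      map_mul' := by intro f h; rfl }
  map_one' := by
    ext f x
    simp
  map_mul' := by
    intro g h
    ext f x
    simp [add_assoc, add_comm, add_left_comm]

/-- The permutational wreath product `(C2 × C2) ≀ D₈ = (C2 × C2) ⋉ D₈⁴`, where the
Klein four-group acts by its regular action on the index set. -/
abbrev KleinWrD8 : Type := ((ZMod 2 × ZMod 2) → DihedralGroup 4) ⋊[regAct] Klein

end DicePaper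

namespace DicePaper
open TreeAut

abbrev TA : Type := TreeAut fun _ => V

namespace TreeAut

variable {X : ℕ → Type u}

theorem root_mul (f g : TreeAut X) (v : Word X 0) :
    (f * g) 0 v = f 0 PUnit.unit * g 0 v := rfl

theorem ext_of_sec {f g : TreeAut X} (h0 : f 0 = g 0) (hs : ∀ x, sec f x = sec g x) :
    f = g := by
  funext n v
  cases n with
  | zero => exact congrFun h0 v
  | succ n => exact congrFun (congrFun (hs v.1) n) v.2

end TreeAut

/-! ### rooted automorphisms -/

theorem rooted_zero (σ : Equiv.Perm V) (v : Word (fun _ => V) 0) : rooted σ 0 v = σ := rfl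

theorem sec_rooted (σ : Equiv.Perm V) (x : V) : sec (rooted σ) x = 1 := rfl

theorem rooted_mul (σ τ : Equiv.Perm V) : rooted σ * rooted τ = rooted (σ * τ) := by
  refine TreeAut.ext_of_sec rfl fun x => ?_
  funext n v
  rfl

theorem rooted_one : rooted 1 = 1 := by
  funext n v
  cases n <;> rfl

theorem addLeft_mul_self (k : V) : Equiv.addLeft k * Equiv.addLeft k = 1 := by
  have hk : k + k = 0 := by revert k; decide
  refine Equiv.ext fun x => ?_
  show k + (k + x) = x
  rw [← add_assoc, hk, zero_add]

theorem hA_mul (k k' : V) : hA k * hA k' = hA (k + k') := by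
  show rooted _ * rooted _ = rooted _
  rw [rooted_mul]
  refine congrArg rooted (Equiv.ext fun x => ?_)
  show k + (k' + x) = (k + k') + x
  rw [add_assoc]

theorem hA_zero : hA 0 = 1 := by
  show rooted _ = 1
  have : Equiv.addLeft (0 : V) = 1 := by
    refine Equiv.ext fun x => ?_
    show (0 : V) + x = x
    rw [zero_add]
  rw [this, rooted_one]

theorem hA_self (k : V) : hA k * hA k = 1 := by
  show rooted _ * rooted _ = 1
  rw [rooted_mul, addLeft_mul_self, rooted_one]

end DicePaper

namespace DicePaper
open TreeAut

/-! ### automorphisms fixing the first level, built from sections -/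

/-- The tree automorphism fixing level one whose first-level sections are `s`. -/
def node1 (s : V → TA) : TA := fun n =>
  match n with
  | 0 => fun _ => 1
  | Nat.succ m => fun v => s v.1 m v.2

theorem node1_zero (s : V → TA) (v : Word (fun _ => V) 0) : node1 s 0 v = 1 := rfl

theorem sec_node1 (s : V → TA) (x : V) : sec (node1 s) x = s x := rfl

theorem node1_one : node1 (fun _ => 1) = 1 := by
  funext n v
  cases n <;> rfl

theorem node1_mul (s t : V → TA) : node1 s * node1 t = node1 (fun x => s x * t x) := by
  refine TreeAut.ext_of_sec (funext fun v => ?_) fun x => ?_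
  · rfl
  · rw [sec_mul, sec_node1, sec_node1, sec_node1]
    rfl

theorem node1_congr {s t : V → TA} (h : ∀ x, s x = t x) : node1 s = node1 t :=
  congrArg node1 (funext h)

theorem node1_mul_rooted (s : V → TA) (σ : Equiv.Perm V) :
    node1 s * rooted σ = rooted σ * node1 (fun x => s (σ x)) := by
  refine TreeAut.ext_of_sec (funext fun v => ?_) fun x => ?_
  · show (1 : Equiv.Perm V) * σ = σ * 1
    rw [one_mul, mul_one]
  · rw [sec_mul, sec_mul, sec_node1, sec_rooted, sec_rooted, sec_node1]
    show s (σ x) * 1 = 1 * s (σ x)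
    rw [one_mul, mul_one]

theorem rooted_conj_node1 (s : V → TA) (k : V) :
    hA k * node1 s * hA k = node1 (fun x => s (k + x)) := by
  show rooted _ * node1 s * rooted _ = _
  rw [mul_assoc, node1_mul_rooted, ← mul_assoc, rooted_mul, addLeft_mul_self, rooted_one,
    one_mul]
  rfl

end DicePaper

namespace DicePaper
open DihedralGroup

section DihLift

variable {G : Type*} [Group G]

theorem pow_mod_four {u : G} (hu : u ^ 4 = 1) (m : ℕ) : u ^ m = u ^ (m % 4) := by
  conv_lhs => rw [← Nat.div_add_mod m 4]
  rw [pow_add, pow_mul, hu, one_pow, one_mul]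

/-- Lift of a pair of involutions with `(p*q)^4 = 1` to a homomorphism from `D₈`. -/
def dihLift (p q : G) (hp : p * p = 1) (hq : q * q = 1) (h4 : (p * q) ^ 4 = 1) :
    DihedralGroup 4 →* G where
  toFun := fun d =>
    match d with
    | r i => (p * q) ^ i.val
    | sr i => p * (p * q) ^ i.val
  map_one' := by
    show (p * q) ^ (0 : ZMod 4).val = 1
    norm_num
  map_mul' := by
    have hpinv : p⁻¹ = p := inv_eq_of_mul_eq_one_right hp
    have hqp : q * p = (p * q) ^ 3 := by
      have h1 : (p * q) * (q * p) = 1 := by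
        rw [mul_assoc, ← mul_assoc q q p, hq, one_mul, hp]
      have h2 : (p * q) * (p * q) ^ 3 = 1 := by rw [← pow_succ', h4]
      exact mul_left_cancel (h1.trans h2.symm)
    have h1 : p * (p * q) * p⁻¹ = (p * q) ^ 3 := by
      rw [hpinv, ← mul_assoc p p q, hp, one_mul]
      exact hqp
    have hpup : ∀ m : ℕ, p * (p * q) ^ m = (p * q) ^ (3 * m) * p := by
      intro m
      have h2 : ((p * q) ^ 3) ^ m = p * (p * q) ^ m * p⁻¹ := by rw [← h1, conj_pow]
      have h3 : (p * q) ^ (3 * m) = p * (p * q) ^ m * p⁻¹ := by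
        rw [pow_mul]; exact h2
      rw [h3, hpinv, mul_assoc, mul_assoc, hp, mul_one]
    have key : ∀ m1 m2 : ℕ, m1 % 4 = m2 % 4 → (p * q) ^ m1 = (p * q) ^ m2 := by
      intro m1 m2 h
      rw [pow_mod_four h4, h, ← pow_mod_four h4]
    rintro (i | i) (j | j) <;>
      simp only [r_mul_r, r_mul_sr, sr_mul_r, sr_mul_sr]
    · show (p * q) ^ (i + j).val = (p * q) ^ i.val * (p * q) ^ j.val
      rw [← pow_add]
      exact key _ _ (by revert i j; decide)
    · show p * (p * q) ^ (j - i).val = (p * q) ^ i.val * (p * (p * q) ^ j.val)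
      rw [hpup (j - i).val, hpup j.val, ← mul_assoc, ← pow_add]
      refine congrArg (· * p) (key _ _ ?_)
      revert i j; decide
    · show p * (p * q) ^ (i + j).val = p * (p * q) ^ i.val * (p * q) ^ j.val
      rw [mul_assoc, ← pow_add]
      refine congrArg (p * ·) (key _ _ ?_)
      revert i j; decide
    · show (p * q) ^ (j - i).val = p * (p * q) ^ i.val * (p * (p * q) ^ j.val)
      rw [hpup i.val, mul_assoc, ← mul_assoc p p _, hp, one_mul, ← pow_add]
      exact key _ _ (by revert i j; decide)

theorem dihLift_r (p q : G) (hp) (hq) (h4) (i : ZMod 4) :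
    dihLift p q hp hq h4 (r i) = (p * q) ^ i.val := rfl

theorem dihLift_sr (p q : G) (hp) (hq) (h4) (i : ZMod 4) :
    dihLift p q hp hq h4 (sr i) = p * (p * q) ^ i.val := rfl

end DihLift

end DicePaper

namespace DicePaper
open TreeAut

/-! ### the generators as involutions; sections of `w` -/

theorem a_sq : aAut * aAut = 1 := by
  show rooted _ * rooted _ = 1
  rw [rooted_mul, addLeft_mul_self, rooted_one]

theorem b_sq : bAut * bAut = 1 := by
  show rooted _ * rooted _ = 1
  rw [rooted_mul, addLeft_mul_self, rooted_one]

theorem c_sq : cAut * cAut = 1 := by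
  show rooted _ * rooted _ = 1
  rw [rooted_mul, addLeft_mul_self, rooted_one]

theorem V_cases (x : V) :
    x = (0,0,0) ∨ x = (0,0,1) ∨ x = (0,1,0) ∨ x = (0,1,1) ∨
    x = (1,0,0) ∨ x = (1,0,1) ∨ x = (1,1,0) ∨ x = (1,1,1) := by
  revert x; decide

/-- The first-level sections of `w`. -/
def wsec (x : V) : TA :=
  if x = 0 then wAut
  else if x = (1, 1, 0) then aAut
  else if x = (1, 0, 1) then bAut
  else if x = (0, 1, 1) then cAut
  else 1

theorem sec_w_zero : sec wAut ((0, 0, 0) : V) = wAut := by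
  funext n v; rfl

theorem sec_w_110 : sec wAut ((1, 1, 0) : V) = aAut := by
  funext n v; cases n <;> rfl

theorem sec_w_101 : sec wAut ((1, 0, 1) : V) = bAut := by
  funext n v; cases n <;> rfl

theorem sec_w_011 : sec wAut ((0, 1, 1) : V) = cAut := by
  funext n v; cases n <;> rfl

theorem sec_w_100 : sec wAut ((1, 0, 0) : V) = 1 := by
  funext n v; cases n <;> rfl

theorem sec_w_010 : sec wAut ((0, 1, 0) : V) = 1 := by
  funext n v; cases n <;> rfl

theorem sec_w_001 : sec wAut ((0, 0, 1) : V) = 1 := by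
  funext n v; cases n <;> rfl

theorem sec_w_111 : sec wAut ((1, 1, 1) : V) = 1 := by
  funext n v; cases n <;> rfl

theorem w_eq_node1 : wAut = node1 wsec := by
  refine TreeAut.ext_of_sec rfl fun x => ?_
  rw [sec_node1]
  rcases V_cases x with rfl|rfl|rfl|rfl|rfl|rfl|rfl|rfl
  · exact sec_w_zero
  · exact sec_w_001
  · exact sec_w_010
  · exact sec_w_011
  · exact sec_w_100
  · exact sec_w_101
  · exact sec_w_110
  · exact sec_w_111

theorem w_mul_w_apply : ∀ (n : ℕ) (v : Word (fun _ => V) n), (wAut * wAut) n v = 1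
  | 0, _ => rfl
  | n + 1, v => by
    obtain ⟨x, v⟩ := v
    show (sec (wAut * wAut) x) n v = 1
    rw [sec_mul]
    show (sec wAut x * sec wAut x) n v = 1
    rcases V_cases x with rfl|rfl|rfl|rfl|rfl|rfl|rfl|rfl
    · rw [sec_w_zero]; exact w_mul_w_apply n v
    · rw [sec_w_001]; rfl
    · rw [sec_w_010]; rfl
    · rw [sec_w_011, c_sq]; rfl
    · rw [sec_w_100]; rfl
    · rw [sec_w_101, b_sq]; rfl
    · rw [sec_w_110, a_sq]; rfl
    · rw [sec_w_111]; rfl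

theorem w_sq : wAut * wAut = 1 := by
  funext n v
  exact w_mul_w_apply n v

theorem invol_pow4 {G : Type*} [Monoid G] {g : G} (h : g * g = 1) : g ^ 4 = 1 := by
  have h4 : g ^ 4 = (g * g) * (g * g) := by
    rw [show (4 : ℕ) = 2 * 2 from rfl, pow_mul, pow_two, pow_two]
  rw [h4, h, one_mul]

theorem u_sq :
    (aAut * wAut) * (aAut * wAut) =
      node1 (fun x => wsec ((1, 0, 0) + x) * wsec x) := by
  rw [w_eq_node1, show aAut = rooted (Equiv.addLeft ((1, 0, 0) : V)) from rfl]
  rw [show rooted (Equiv.addLeft ((1,0,0) : V)) * node1 wsec *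
      (rooted (Equiv.addLeft ((1,0,0) : V)) * node1 wsec)
      = rooted (Equiv.addLeft ((1,0,0) : V)) * (node1 wsec * rooted (Equiv.addLeft ((1,0,0) : V)))
        * node1 wsec from by group]
  rw [node1_mul_rooted, ← mul_assoc, rooted_mul, addLeft_mul_self, rooted_one, one_mul,
    node1_mul]
  rfl

theorem u_pow4 : (aAut * wAut) ^ 4 = 1 := by
  rw [show ((4:ℕ) = 2*2) from rfl, pow_mul, pow_two, pow_two, u_sq, node1_mul]
  refine (node1_congr fun x => ?_).trans node1_one
  rcases V_cases x with rfl|rfl|rfl|rfl|rfl|rfl|rfl|rfl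
  · show (1 * wAut) * (1 * wAut) = 1
    rw [one_mul, w_sq]
  · show (bAut * 1) * (bAut * 1) = 1
    rw [mul_one, b_sq]
  · show (aAut * 1) * (aAut * 1) = 1
    rw [mul_one, a_sq]
  · show (1 * cAut) * (1 * cAut) = 1
    rw [one_mul, c_sq]
  · show (wAut * 1) * (wAut * 1) = 1
    rw [mul_one, w_sq]
  · show (1 * bAut) * (1 * bAut) = 1
    rw [one_mul, b_sq]
  · show (1 * aAut) * (1 * aAut) = 1
    rw [one_mul, a_sq]
  · show (cAut * 1) * (cAut * 1) = 1
    rw [mul_one, c_sq]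

theorem cb_pow4 : (cAut * bAut) ^ 4 = 1 := by
  refine invol_pow4 ?_
  show (rooted _ * rooted _) * (rooted _ * rooted _) = 1
  rw [rooted_mul, rooted_mul]
  rw [show Equiv.addLeft ((0,0,1) : V) * Equiv.addLeft ((0,1,0) : V) *
    (Equiv.addLeft ((0,0,1) : V) * Equiv.addLeft ((0,1,0) : V)) = 1 from Equiv.ext (by decide)]
  exact rooted_one

/-- The copy of `D₈` inside `Aut T` generated by `a` and `w`. -/
def ρD : DihedralGroup 4 →* TA := dihLift aAut wAut a_sq w_sq u_pow4

/-- The homomorphism `D₈ → ⟨b,c⟩` with `a ↦ c`, `w ↦ b`. -/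
def ηD : DihedralGroup 4 →* TA := dihLift cAut bAut c_sq b_sq cb_pow4

/-- The involutive automorphism of `D₈` exchanging the two canonical generators. -/
def ιD : DihedralGroup 4 →* DihedralGroup 4 :=
  dihLift (DihedralGroup.sr 1) (DihedralGroup.sr 0) (by decide) (by decide) (by decide)

theorem iota_iota : ∀ d, ιD (ιD d) = d := by decide

end DicePaper

namespace DicePaper
open TreeAut

/-- Coordinates of the "red" block element associated to `d ∈ D₈`. -/
def Pc (d : DihedralGroup 4) : V → TA := fun x =>
  if x = 0 then ρD d
  else if x = (1, 1, 0) then ρD (ιD d)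
  else if x = (1, 0, 1) then ηD d
  else if x = (0, 1, 1) then ηD (ιD d)
  else 1

theorem Pc_hom (d d' : DihedralGroup 4) (x : V) : Pc (d * d') x = Pc d x * Pc d' x := by
  rcases V_cases x with rfl|rfl|rfl|rfl|rfl|rfl|rfl|rfl
  · show ρD (d * d') = ρD d * ρD d'
    exact map_mul ρD d d'
  · show (1 : TA) = 1 * 1
    rw [one_mul]
  · show (1 : TA) = 1 * 1
    rw [one_mul]
  · show ηD (ιD (d * d')) = ηD (ιD d) * ηD (ιD d')
    rw [map_mul, map_mul]
  · show (1 : TA) = 1 * 1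
    rw [one_mul]
  · show ηD (d * d') = ηD d * ηD d'
    exact map_mul ηD d d'
  · show ρD (ιD (d * d')) = ρD (ιD d) * ρD (ιD d')
    rw [map_mul, map_mul]
  · show (1 : TA) = 1 * 1
    rw [one_mul]

theorem Pc_one (x : V) : Pc 1 x = 1 := by
  rcases V_cases x with rfl|rfl|rfl|rfl|rfl|rfl|rfl|rfl
  · show ρD 1 = 1
    exact map_one ρD
  · rfl
  · rfl
  · show ηD (ιD 1) = 1
    rw [map_one, map_one]
  · rfl
  · show ηD 1 = 1
    exact map_one ηD
  · show ρD (ιD 1) = 1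
    rw [map_one, map_one]
  · rfl

/-- The red-block embedding `D₈ → Aut T`. -/
def Pdef (d : DihedralGroup 4) : TA := node1 (Pc d)

/-- The black-block embedding `D₈ → Aut T`. -/
def Qdef (e : DihedralGroup 4) : TA := hA (1, 0, 0) * Pdef e * hA (1, 0, 0)

theorem P_mul (d d' : DihedralGroup 4) : Pdef d * Pdef d' = Pdef (d * d') := by
  show node1 _ * node1 _ = node1 _
  rw [node1_mul]
  exact node1_congr fun x => (Pc_hom d d' x).symm

theorem P_one : Pdef 1 = 1 := by
  show node1 _ = 1
  exact (node1_congr Pc_one).trans node1_one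

theorem Q_node (e : DihedralGroup 4) : Qdef e = node1 (fun x => Pc e ((1, 0, 0) + x)) :=
  rooted_conj_node1 (Pc e) (1, 0, 0)

theorem Q_mul (e e' : DihedralGroup 4) : Qdef e * Qdef e' = Qdef (e * e') := by
  rw [Q_node, Q_node, Q_node, node1_mul]
  exact node1_congr fun x => (Pc_hom e e' _).symm

theorem Q_one : Qdef 1 = 1 := by
  rw [Q_node]
  exact (node1_congr fun x => Pc_one _).trans node1_one

theorem PQ_comm (d e : DihedralGroup 4) : Pdef d * Qdef e = Qdef e * Pdef d := by
  rw [Q_node, show Pdef d = node1 (Pc d) from rfl, node1_mul, node1_mul]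
  refine node1_congr fun x => ?_
  rcases V_cases x with rfl|rfl|rfl|rfl|rfl|rfl|rfl|rfl
  · show ρD d * 1 = 1 * ρD d
    rw [one_mul, mul_one]
  · show 1 * ηD e = ηD e * 1
    rw [one_mul, mul_one]
  · show 1 * ρD (ιD e) = ρD (ιD e) * 1
    rw [one_mul, mul_one]
  · show ηD (ιD d) * 1 = 1 * ηD (ιD d)
    rw [one_mul, mul_one]
  · show 1 * ρD e = ρD e * 1
    rw [one_mul, mul_one]
  · show ηD d * 1 = 1 * ηD d
    rw [one_mul, mul_one]
  · show ρD (ιD d) * 1 = 1 * ρD (ιD d)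
    rw [one_mul, mul_one]
  · show 1 * ηD (ιD e) = ηD (ιD e) * 1
    rw [one_mul, mul_one]

theorem conjP100 (d : DihedralGroup 4) : hA (1, 0, 0) * Pdef d * hA (1, 0, 0) = Qdef d := rfl

theorem conjP110 (d : DihedralGroup 4) :
    hA (1, 1, 0) * Pdef d * hA (1, 1, 0) = Pdef (ιD d) := by
  rw [show Pdef d = node1 (Pc d) from rfl, rooted_conj_node1]
  refine node1_congr fun x => ?_
  rcases V_cases x with rfl|rfl|rfl|rfl|rfl|rfl|rfl|rfl
  · rfl
  · rfl
  · rfl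
  · show ηD d = ηD (ιD (ιD d))
    rw [iota_iota]
  · rfl
  · rfl
  · show ρD d = ρD (ιD (ιD d))
    rw [iota_iota]
  · rfl

theorem conjP010 (d : DihedralGroup 4) :
    hA (0, 1, 0) * Pdef d * hA (0, 1, 0) = Qdef (ιD d) := by
  rw [show Pdef d = node1 (Pc d) from rfl, rooted_conj_node1, Q_node]
  refine node1_congr fun x => ?_
  rcases V_cases x with rfl|rfl|rfl|rfl|rfl|rfl|rfl|rfl
  · rfl
  · rfl
  · show ρD d = ρD (ιD (ιD d))
    rw [iota_iota]
  · rfl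
  · rfl
  · rfl
  · rfl
  · show ηD d = ηD (ιD (ιD d))
    rw [iota_iota]

theorem conj_to_swap {k : V} {F G : TA} (h : hA k * F * hA k = G) :
    hA k * F = G * hA k := by
  calc hA k * F = hA k * F * (hA k * hA k) := by rw [hA_self, mul_one]
  _ = (hA k * F * hA k) * hA k := by group
  _ = G * hA k := by rw [h]

theorem conjQ100 (e : DihedralGroup 4) :
    hA (1, 0, 0) * Qdef e * hA (1, 0, 0) = Pdef e := by
  show hA (1,0,0) * (hA (1,0,0) * Pdef e * hA (1,0,0)) * hA (1,0,0) = Pdef e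
  rw [show hA ((1,0,0) : V) * (hA ((1,0,0) : V) * Pdef e * hA ((1,0,0) : V)) * hA ((1,0,0) : V)
      = (hA (1,0,0) * hA (1,0,0)) * Pdef e * (hA (1,0,0) * hA (1,0,0)) from by group,
    hA_self, one_mul, mul_one]

theorem conjQ110 (e : DihedralGroup 4) :
    hA (1, 1, 0) * Qdef e * hA (1, 1, 0) = Qdef (ιD e) := by
  show hA (1,1,0) * (hA (1,0,0) * Pdef e * hA (1,0,0)) * hA (1,1,0) = Qdef (ιD e)
  rw [show hA ((1,1,0) : V) * (hA ((1,0,0) : V) * Pdef e * hA ((1,0,0) : V)) * hA ((1,1,0) : V)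
      = (hA (1,1,0) * hA (1,0,0)) * Pdef e * (hA (1,0,0) * hA (1,1,0)) from by group,
    hA_mul, hA_mul]
  exact conjP010 e

theorem conjQ010 (e : DihedralGroup 4) :
    hA (0, 1, 0) * Qdef e * hA (0, 1, 0) = Pdef (ιD e) := by
  show hA (0,1,0) * (hA (1,0,0) * Pdef e * hA (1,0,0)) * hA (0,1,0) = Pdef (ιD e)
  rw [show hA ((0,1,0) : V) * (hA ((1,0,0) : V) * Pdef e * hA ((1,0,0) : V)) * hA ((0,1,0) : V)
      = (hA (0,1,0) * hA (1,0,0)) * Pdef e * (hA (1,0,0) * hA (0,1,0)) from by group,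
    hA_mul, hA_mul]
  exact conjP110 e

end DicePaper

namespace DicePaper
open TreeAut

/-! ### the embedding data -/

/-- Identification of the Klein group with rooted `⟨a,b⟩`-translations. -/
def emb (k : Klein) : V := ((Multiplicative.toAdd k).1, (Multiplicative.toAdd k).2, 0)

theorem emb_mul : ∀ k k' : Klein, emb (k * k') = emb k + emb k' := by decide

theorem regAct_apply (k : Klein) (f : (ZMod 2 × ZMod 2) → DihedralGroup 4)
    (z : ZMod 2 × ZMod 2) : regAct k f z = f (Multiplicative.toAdd k + z) := rfl

/-- Interpretation of wreath-product elements as tree automorphisms. -/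
def Psi (x : KleinWrD8) : TA :=
  Pdef (x.left (0, 0)) * Qdef (x.left (1, 0)) * hA (emb x.right)

/-- The model subgroup condition. -/
def InM (x : KleinWrD8) : Prop :=
  ∀ z : ZMod 2 × ZMod 2, x.left (z + (1, 1)) = ιD (x.left z)

theorem psi_expand (g g' : (ZMod 2 × ZMod 2) → DihedralGroup 4) (k k' : Klein) :
    Psi (⟨g, k⟩ * ⟨g', k'⟩) =
      Pdef (g (0, 0) * g' (Multiplicative.toAdd k + (0, 0))) *
        Qdef (g (1, 0) * g' (Multiplicative.toAdd k + (1, 0))) *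
        (hA (emb k) * hA (emb k')) := by
  show Pdef ((g * regAct k g') (0, 0)) * Qdef ((g * regAct k g') (1, 0)) *
      hA (emb (k * k')) = _
  rw [Pi.mul_apply, Pi.mul_apply, regAct_apply, regAct_apply, emb_mul, ← hA_mul]

theorem assemble0 (d e d' e' : DihedralGroup 4) (E : TA) :
    Pdef (d * d') * Qdef (e * e') * (1 * E) =
      Pdef d * Qdef e * 1 * (Pdef d' * Qdef e' * E) := by
  symm
  calc Pdef d * Qdef e * 1 * (Pdef d' * Qdef e' * E)
      = Pdef d * (Qdef e * Pdef d') * Qdef e' * E := by group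
    _ = Pdef d * (Pdef d' * Qdef e) * Qdef e' * E := by rw [← PQ_comm d' e]
    _ = (Pdef d * Pdef d') * (Qdef e * Qdef e') * (1 * E) := by group
    _ = Pdef (d * d') * Qdef (e * e') * (1 * E) := by rw [P_mul, Q_mul]

theorem assemble100 (d e d' e' : DihedralGroup 4) (E : TA) :
    Pdef (d * e') * Qdef (e * d') * (hA (1, 0, 0) * E) =
      Pdef d * Qdef e * hA (1, 0, 0) * (Pdef d' * Qdef e' * E) := by
  have s1 : hA ((1,0,0) : V) * Pdef d' = Qdef d' * hA (1,0,0) := conj_to_swap (conjP100 d')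
  have s2 : hA ((1,0,0) : V) * Qdef e' = Pdef e' * hA (1,0,0) := conj_to_swap (conjQ100 e')
  symm
  calc Pdef d * Qdef e * hA (1,0,0) * (Pdef d' * Qdef e' * E)
      = Pdef d * Qdef e * ((hA (1,0,0) * Pdef d') * Qdef e' * E) := by group
    _ = Pdef d * Qdef e * ((Qdef d' * hA (1,0,0)) * Qdef e' * E) := by rw [s1]
    _ = Pdef d * Qdef e * (Qdef d' * ((hA (1,0,0) * Qdef e') * E)) := by group
    _ = Pdef d * Qdef e * (Qdef d' * ((Pdef e' * hA (1,0,0)) * E)) := by rw [s2]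
    _ = Pdef d * (Qdef e * (Qdef d' * Pdef e')) * (hA (1,0,0) * E) := by group
    _ = Pdef d * (Qdef e * (Pdef e' * Qdef d')) * (hA (1,0,0) * E) := by rw [← PQ_comm e' d']
    _ = Pdef d * ((Qdef e * Pdef e') * Qdef d') * (hA (1,0,0) * E) := by group
    _ = Pdef d * ((Pdef e' * Qdef e) * Qdef d') * (hA (1,0,0) * E) := by rw [← PQ_comm e' e]
    _ = (Pdef d * Pdef e') * (Qdef e * Qdef d') * (hA (1,0,0) * E) := by group
    _ = Pdef (d * e') * Qdef (e * d') * (hA (1,0,0) * E) := by rw [P_mul, Q_mul]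

theorem assemble110 (d e d' e' : DihedralGroup 4) (E : TA) :
    Pdef (d * ιD d') * Qdef (e * ιD e') * (hA (1, 1, 0) * E) =
      Pdef d * Qdef e * hA (1, 1, 0) * (Pdef d' * Qdef e' * E) := by
  have s1 : hA ((1,1,0) : V) * Pdef d' = Pdef (ιD d') * hA (1,1,0) := conj_to_swap (conjP110 d')
  have s2 : hA ((1,1,0) : V) * Qdef e' = Qdef (ιD e') * hA (1,1,0) := conj_to_swap (conjQ110 e')
  symm
  calc Pdef d * Qdef e * hA (1,1,0) * (Pdef d' * Qdef e' * E)
      = Pdef d * Qdef e * ((hA (1,1,0) * Pdef d') * Qdef e' * E) := by group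
    _ = Pdef d * Qdef e * ((Pdef (ιD d') * hA (1,1,0)) * Qdef e' * E) := by rw [s1]
    _ = Pdef d * Qdef e * (Pdef (ιD d') * ((hA (1,1,0) * Qdef e') * E)) := by group
    _ = Pdef d * Qdef e * (Pdef (ιD d') * ((Qdef (ιD e') * hA (1,1,0)) * E)) := by rw [s2]
    _ = Pdef d * (Qdef e * Pdef (ιD d')) * Qdef (ιD e') * (hA (1,1,0) * E) := by group
    _ = Pdef d * (Pdef (ιD d') * Qdef e) * Qdef (ιD e') * (hA (1,1,0) * E) := by
        rw [← PQ_comm (ιD d') e]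
    _ = (Pdef d * Pdef (ιD d')) * (Qdef e * Qdef (ιD e')) * (hA (1,1,0) * E) := by group
    _ = Pdef (d * ιD d') * Qdef (e * ιD e') * (hA (1,1,0) * E) := by rw [P_mul, Q_mul]

theorem assemble010 (d e d' e' : DihedralGroup 4) (E : TA) :
    Pdef (d * ιD e') * Qdef (e * ιD d') * (hA (0, 1, 0) * E) =
      Pdef d * Qdef e * hA (0, 1, 0) * (Pdef d' * Qdef e' * E) := by
  have s1 : hA ((0,1,0) : V) * Pdef d' = Qdef (ιD d') * hA (0,1,0) := conj_to_swap (conjP010 d')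
  have s2 : hA ((0,1,0) : V) * Qdef e' = Pdef (ιD e') * hA (0,1,0) := conj_to_swap (conjQ010 e')
  symm
  calc Pdef d * Qdef e * hA (0,1,0) * (Pdef d' * Qdef e' * E)
      = Pdef d * Qdef e * ((hA (0,1,0) * Pdef d') * Qdef e' * E) := by group
    _ = Pdef d * Qdef e * ((Qdef (ιD d') * hA (0,1,0)) * Qdef e' * E) := by rw [s1]
    _ = Pdef d * Qdef e * (Qdef (ιD d') * ((hA (0,1,0) * Qdef e') * E)) := by group
    _ = Pdef d * Qdef e * (Qdef (ιD d') * ((Pdef (ιD e') * hA (0,1,0)) * E)) := by rw [s2]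
    _ = Pdef d * (Qdef e * (Qdef (ιD d') * Pdef (ιD e'))) * (hA (0,1,0) * E) := by group
    _ = Pdef d * (Qdef e * (Pdef (ιD e') * Qdef (ιD d'))) * (hA (0,1,0) * E) := by
        rw [← PQ_comm (ιD e') (ιD d')]
    _ = Pdef d * ((Qdef e * Pdef (ιD e')) * Qdef (ιD d')) * (hA (0,1,0) * E) := by group
    _ = Pdef d * ((Pdef (ιD e') * Qdef e) * Qdef (ιD d')) * (hA (0,1,0) * E) := by
        rw [← PQ_comm (ιD e') e]
    _ = (Pdef d * Pdef (ιD e')) * (Qdef e * Qdef (ιD d')) * (hA (0,1,0) * E) := by group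
    _ = Pdef (d * ιD e') * Qdef (e * ιD d') * (hA (0,1,0) * E) := by rw [P_mul, Q_mul]

theorem klein_cases (k : Klein) :
    k = Multiplicative.ofAdd (0, 0) ∨ k = Multiplicative.ofAdd (1, 0) ∨
    k = Multiplicative.ofAdd (0, 1) ∨ k = Multiplicative.ofAdd (1, 1) := by
  revert k; decide

theorem psi_mul (x y : KleinWrD8) (hy : InM y) : Psi (x * y) = Psi x * Psi y := by
  obtain ⟨g, k⟩ := x
  obtain ⟨g', k'⟩ := y
  have h01 : g' ((0, 1) : ZMod 2 × ZMod 2) = ιD (g' (1, 0)) := hy (1, 0)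
  have h11 : g' ((1, 1) : ZMod 2 × ZMod 2) = ιD (g' (0, 0)) := hy (0, 0)
  rw [psi_expand]
  rcases klein_cases k with rfl|rfl|rfl|rfl
  · show Pdef (g (0,0) * g' (0,0)) * Qdef (g (1,0) * g' (1,0)) * (hA 0 * hA (emb k'))
      = Pdef (g (0,0)) * Qdef (g (1,0)) * hA 0 * (Pdef (g' (0,0)) * Qdef (g' (1,0)) * hA (emb k'))
    rw [hA_zero]
    exact assemble0 _ _ _ _ _
  · show Pdef (g (0,0) * g' (1,0)) * Qdef (g (1,0) * g' (0,0)) * (hA (1,0,0) * hA (emb k'))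
      = Pdef (g (0,0)) * Qdef (g (1,0)) * hA (1,0,0) *
        (Pdef (g' (0,0)) * Qdef (g' (1,0)) * hA (emb k'))
    exact assemble100 _ _ _ _ _
  · show Pdef (g (0,0) * g' (0,1)) * Qdef (g (1,0) * g' (1,1)) * (hA (0,1,0) * hA (emb k'))
      = Pdef (g (0,0)) * Qdef (g (1,0)) * hA (0,1,0) *
        (Pdef (g' (0,0)) * Qdef (g' (1,0)) * hA (emb k'))
    rw [h01, h11]
    exact assemble010 _ _ _ _ _
  · show Pdef (g (0,0) * g' (1,1)) * Qdef (g (1,0) * g' (0,1)) * (hA (1,1,0) * hA (emb k'))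
      = Pdef (g (0,0)) * Qdef (g (1,0)) * hA (1,1,0) *
        (Pdef (g' (0,0)) * Qdef (g' (1,0)) * hA (emb k'))
    rw [h01, h11]
    exact assemble110 _ _ _ _ _

theorem psi_one : Psi 1 = 1 := by
  show Pdef 1 * Qdef 1 * hA (emb 1) = 1
  rw [P_one, Q_one, show emb 1 = (0 : V) from rfl, hA_zero, mul_one, mul_one]

instance wordV2DecEq : DecidableEq (Word (fun _ => V) 2) :=
  (inferInstance : DecidableEq (V × V × PUnit))

theorem rho_ker (d : DihedralGroup 4) (h : ρD d = 1) : d = 1 := by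
  have h1 : act (fun _ => V) (ρD d) 2 (((0,0,0) : V), ((0,0,0) : V), PUnit.unit)
      = (((0,0,0) : V), ((0,0,0) : V), PUnit.unit) := by
    rw [h]; exact act_one 2 _ _
  have h2 : act (fun _ => V) (ρD d) 2 (((1,1,0) : V), ((0,0,0) : V), PUnit.unit)
      = (((1,1,0) : V), ((0,0,0) : V), PUnit.unit) := by
    rw [h]; exact act_one 2 _ _
  have h3 : act (fun _ => V) (ρD d) 2 (((0,1,0) : V), ((0,0,0) : V), PUnit.unit)
      = (((0,1,0) : V), ((0,0,0) : V), PUnit.unit) := by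
    rw [h]; exact act_one 2 _ _
  clear h
  revert h1 h2 h3
  revert d
  exact @of_decide_eq_true _ (@Fintype.decidableForallFintype _ _ (fun d => @instDecidableForall _ _ (wordV2DecEq _ _) (@instDecidableForall _ _ (wordV2DecEq _ _) (@instDecidableForall _ _ (wordV2DecEq _ _) (decEq _ _)))) _) rfl

end DicePaper

namespace DicePaper
open TreeAut

theorem psi_ker (x : KleinWrD8) (hx : InM x) (h : Psi x = 1) : x = 1 := by
  obtain ⟨g, k⟩ := x
  rw [show Psi ⟨g, k⟩ = Pdef (g (0, 0)) * Qdef (g (1, 0)) * hA (emb k) from rfl, Q_node] at h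
  have hroot := congrFun (congrFun h 0) PUnit.unit
  have hk0 : emb k = 0 := by
    have h0 := congrArg (fun σ : Equiv.Perm V => σ 0) hroot
    have h1 : emb k + 0 = 0 := h0
    rwa [add_zero] at h1
  have hk : k = 1 := by
    have : ∀ k : Klein, emb k = 0 → k = 1 := by decide
    exact this k hk0
  subst hk
  rw [show hA (emb (1 : Klein)) = 1 from hA_zero, mul_one,
    show Pdef (g (0, 0)) = node1 (Pc (g (0, 0))) from rfl, node1_mul] at h
  have hd : g (0, 0) = 1 := by
    refine rho_ker _ ?_
    have h0 := congrArg (fun f : TA => sec f ((0, 0, 0) : V)) h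
    have h1 : ρD (g (0, 0)) * 1 = 1 := h0
    rwa [mul_one] at h1
  have he : g (1, 0) = 1 := by
    refine rho_ker _ ?_
    have h0 := congrArg (fun f : TA => sec f ((1, 0, 0) : V)) h
    have h1 : (1 : TA) * ρD (g (1, 0)) = 1 := h0
    rwa [one_mul] at h1
  have hg : g = 1 := by
    funext z
    rcases (show z = ((0, 0) : ZMod 2 × ZMod 2) ∨ z = (1, 0) ∨ z = (0, 1) ∨ z = (1, 1) from
      by revert z; decide) with rfl | rfl | rfl | rfl
    · exact hd
    · exact he
    · have h' : g ((0, 1) : ZMod 2 × ZMod 2) = ιD (g (1, 0)) := hx (1, 0)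
      rw [he, map_one] at h'
      exact h'
    · have h' : g ((1, 1) : ZMod 2 × ZMod 2) = ιD (g (0, 0)) := hx (0, 0)
      rw [hd, map_one] at h'
      exact h'
  rw [hg]
  rfl

/-- The model subgroup of the wreath product. -/
def Msub : Subgroup KleinWrD8 where
  carrier := {x | InM x}
  one_mem' := by
    intro z
    rw [SemidirectProduct.one_left, Pi.one_apply, Pi.one_apply, map_one]
  mul_mem' := by
    intro x y hx hy
    intro z
    have h2 : y.left (Multiplicative.toAdd x.right + (z + (1, 1)))
        = ιD (y.left (Multiplicative.toAdd x.right + z)) := by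
      rw [← add_assoc]
      exact hy _
    rw [SemidirectProduct.mul_left, Pi.mul_apply, Pi.mul_apply, map_mul,
      regAct_apply, regAct_apply, hx z, h2]
  inv_mem' := by
    intro x hx
    intro z
    rw [SemidirectProduct.inv_left, regAct_apply, regAct_apply, Pi.inv_apply, Pi.inv_apply,
      ← add_assoc, hx _]
    exact (map_inv ιD _).symm

def alphaW : KleinWrD8 := ⟨1, Multiplicative.ofAdd (1, 0)⟩
def betaW : KleinWrD8 := ⟨1, Multiplicative.ofAdd (0, 1)⟩
def omegaW : KleinWrD8 :=
  ⟨fun z => if z = (0, 0) then DihedralGroup.sr 1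
    else if z = (1, 1) then DihedralGroup.sr 0 else 1, 1⟩

theorem alpha_mem : InM alphaW := by intro z; revert z; decide
theorem beta_mem : InM betaW := by intro z; revert z; decide
theorem omega_mem : InM omegaW := by intro z; revert z; decide

theorem psi_alpha : Psi alphaW = aAut := by
  show Pdef 1 * Qdef 1 * hA (emb (Multiplicative.ofAdd (1, 0))) = aAut
  rw [P_one, Q_one, one_mul, one_mul]
  rfl

theorem psi_beta : Psi betaW = bAut := by
  show Pdef 1 * Qdef 1 * hA (emb (Multiplicative.ofAdd (0, 1))) = bAut
  rw [P_one, Q_one, one_mul, one_mul]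
  rfl

theorem psi_omega : Psi omegaW = wAut := by
  show Pdef (DihedralGroup.sr 1) * Qdef 1 * hA (emb 1) = wAut
  rw [Q_one, mul_one, show emb (1 : Klein) = (0 : V) from rfl, hA_zero, mul_one,
    w_eq_node1, show Pdef (DihedralGroup.sr 1) = node1 (Pc (DihedralGroup.sr 1)) from rfl]
  refine node1_congr fun x => ?_
  rcases V_cases x with rfl|rfl|rfl|rfl|rfl|rfl|rfl|rfl
  · show aAut * (aAut * wAut) ^ 1 = wAut
    rw [pow_one, ← mul_assoc, a_sq, one_mul]
  · rfl
  · rfl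
  · show ηD (ιD (DihedralGroup.sr 1)) = cAut
    rw [show ιD (DihedralGroup.sr 1) = DihedralGroup.sr 0 from by decide]
    show cAut * (cAut * bAut) ^ 0 = cAut
    rw [pow_zero, mul_one]
  · rfl
  · show cAut * (cAut * bAut) ^ 1 = bAut
    rw [pow_one, ← mul_assoc, c_sq, one_mul]
  · show ρD (ιD (DihedralGroup.sr 1)) = aAut
    rw [show ιD (DihedralGroup.sr 1) = DihedralGroup.sr 0 from by decide]
    show aAut * (aAut * wAut) ^ 0 = aAut
    rw [pow_zero, mul_one]
  · rfl

/-- The wreath-product equivalence with the product type. -/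
def wrEquiv : KleinWrD8 ≃ ((ZMod 2 × ZMod 2) → DihedralGroup 4) × Klein where
  toFun x := (x.left, x.right)
  invFun p := ⟨p.1, p.2⟩
  left_inv x := rfl
  right_inv p := rfl

instance : Finite KleinWrD8 := Finite.of_equiv _ wrEquiv.symm

theorem card_W : Nat.card KleinWrD8 = 2 ^ 14 := by
  rw [Nat.card_congr wrEquiv, Nat.card_prod, Nat.card_eq_fintype_card,
    Nat.card_eq_fintype_card, Fintype.card_fun, DihedralGroup.card]
  norm_num

end DicePaper


open DicePaper in
/-- `B = ⟨a, b, w⟩` embeds into the permutational wreath product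
`(C2 × C2) ≀ D₈`; in particular `B` is a finite 2-group. -/
theorem stmt4 :
    (∃ φ : (Subgroup.closure {aAut, bAut, wAut} : Subgroup (TreeAut fun _ => V)) →*
        KleinWrD8, Function.Injective φ) ∧
    ∃ n : ℕ, Nat.card
      (Subgroup.closure {aAut, bAut, wAut} : Subgroup (TreeAut fun _ => V)) = 2 ^ n := by
    classical
  set B : Subgroup (TreeAut fun _ => V) := Subgroup.closure {aAut, bAut, wAut} with hB
  let Ψ : Msub →* TA :=
    { toFun := fun m => Psi m.1
      map_one' := psi_one
      map_mul' := fun m m' => psi_mul m.1 m'.1 m'.2 }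
  have hinj : Function.Injective Ψ := by
    intro m m' hmm
    have h1 : Ψ (m * m'⁻¹) = 1 := by rw [map_mul, map_inv, hmm, mul_inv_cancel]
    have h2 : ((m * m'⁻¹ : Msub) : KleinWrD8) = 1 := psi_ker _ (m * m'⁻¹).2 h1
    have h3 : m * m'⁻¹ = 1 := Subtype.ext h2
    exact (mul_inv_eq_one.mp h3)
  have hmem : B ≤ Ψ.range := by
    rw [hB, Subgroup.closure_le]
    rintro f (rfl | rfl | rfl)
    · exact ⟨⟨alphaW, alpha_mem⟩, psi_alpha⟩
    · exact ⟨⟨betaW, beta_mem⟩, psi_beta⟩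
    · exact ⟨⟨omegaW, omega_mem⟩, psi_omega⟩
  let e := MonoidHom.ofInjective hinj
  let φ : B →* KleinWrD8 :=
    (Msub.subtype).comp ((e.symm.toMonoidHom).comp (Subgroup.inclusion hmem))
  have hφ : Function.Injective φ :=
    (Subgroup.subtype_injective _).comp
      ((e.symm.injective).comp (Subgroup.inclusion_injective hmem))
  refine ⟨⟨φ, hφ⟩, ?_⟩
  have hcard : Nat.card B = Nat.card φ.range :=
    Nat.card_congr (MonoidHom.ofInjective hφ).toEquiv
  have hdvd : Nat.card φ.range ∣ Nat.card KleinWrD8 := Subgroup.card_subgroup_dvd_card _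
  rw [card_W] at hdvd
  obtain ⟨m, _, hEq⟩ := (Nat.dvd_prime_pow Nat.prime_two).mp (hcard ▸ hdvd)
  exact ⟨m, hEq⟩
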